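/- arXiv:1706.08076 — 2 statements merged into one kernel-verified Lean document; each statement's English description precedes it below -/
import Mathlib

section
/- Let (N,v) be a TU-game and x a pre-imputation. If x is the pre-nucleolus (i.e., θ(x) ≤_L θ(z) for all pre-imputations z) and the pre-nucleolus point is unique, then x has Property I: for every ψ ∈ ℝ with D(ψ,x) ≠ ∅, every y ∈ ℝ^N with y(N) = 0 and y(S) ≥ 0 for all S ∈ D(ψ,x) satisfies y(S) = 0 for all S ∈ D(ψ,x). -/
open Finset

noncomputable def excess {α : Type*} (v : Finset α → ℝ) (x : α → ℝ) (S : Finset α) : ℝ :=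
  v S - ∑ k ∈ S, x k

noncomputable def Dset {α : Type*} [Fintype α] [DecidableEq α]
    (v : Finset α → ℝ) (x : α → ℝ) (ψ : ℝ) : Finset (Finset α) :=
  (Finset.univ.powerset.erase (∅ : Finset α)).filter (fun S => ψ ≤ excess v x S)

def indVec {α : Type*} [DecidableEq α] (S : Finset α) : α → ℝ := fun k => if k ∈ S then 1 else 0

def IsBalanced {α : Type*} [Fintype α] [DecidableEq α] (B : Finset (Finset α)) : Prop :=
  ∃ w : Finset α → ℝ, (∀ S ∈ B, 0 < w S) ∧ (∑ S ∈ B, w S • indVec S) = fun _ => (1:ℝ)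

noncomputable def theta {α : Type*} [Fintype α] [DecidableEq α]
    (v : Finset α → ℝ) (x : α → ℝ) : List ℝ :=
  List.insertionSort (· ≥ ·) (((Finset.univ.powerset.erase (∅ : Finset α)).toList).map (excess v x))

def lexLe (l₁ l₂ : List ℝ) : Prop := l₁ = l₂ ∨ List.Lex (· < ·) l₁ l₂

/-! Suppose `y` is nonnegative on `D(ψ, x)` but `y(S) > 0` for some `S ∈ D(ψ, x)`, and move to
`z = x + ε y` with `ε > 0`. This is again a pre-imputation; no excess of a coalition in `D(ψ, x)`
goes up and that of `S` goes down; and for `ε` small enough every coalition of `D(ψ, x)` still has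
a larger excess than every coalition outside it. So the first `|D(ψ, x)|` entries of `θ(z)` are
entrywise at most those of `θ(x)` and have a smaller sum, which gives `θ(z) <_L θ(x)` and
contradicts the minimality of `x`. -/

open Filter Topology

namespace List

variable {α : Type*} [LinearOrder α]

theorem orderedInsert_ge_eq_cons {a : α} {l : List α} (h : Pairwise (· ≥ ·) (a :: l)) :
    l.orderedInsert (· ≥ ·) a = a :: l := by
  cases l with
  | nil => rfl
  | cons b l => exact orderedInsert_cons_of_le _ _ (rel_of_pairwise_cons h mem_cons_self)

theorem Forall₂.orderedInsert_ge {l m : List α} (h : Forall₂ (· ≤ ·) l m) {a b : α} (hab : a ≤ b)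
    (hl : Pairwise (· ≥ ·) l) (hm : Pairwise (· ≥ ·) m) :
    Forall₂ (· ≤ ·) (l.orderedInsert (· ≥ ·) a) (m.orderedInsert (· ≥ ·) b) := by
  induction h generalizing a b with
  | nil => exact .cons hab .nil
  | @cons c d l m hcd h ih =>
    by_cases hca : a ≥ c <;> by_cases hdb : b ≥ d
    · rw [orderedInsert_cons_of_le (· ≥ ·) _ hca, orderedInsert_cons_of_le (· ≥ ·) _ hdb]
      exact .cons hab (.cons hcd h)
    · rw [orderedInsert_cons_of_le (· ≥ ·) _ hca, orderedInsert_of_not_le (· ≥ ·) _ hdb,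
        ← orderedInsert_ge_eq_cons hl]
      exact .cons (hab.trans (not_le.1 hdb).le) (ih (hca.trans hab) hl.of_cons hm.of_cons)
    · rw [orderedInsert_of_not_le (· ≥ ·) _ hca, orderedInsert_cons_of_le (· ≥ ·) _ hdb,
        ← orderedInsert_ge_eq_cons hm]
      exact .cons (hcd.trans hdb) (ih ((not_le.1 hca).le.trans hcd) hl.of_cons hm.of_cons)
    · rw [orderedInsert_of_not_le (· ≥ ·) _ hca, orderedInsert_of_not_le (· ≥ ·) _ hdb]
      exact .cons hcd (ih hab hl.of_cons hm.of_cons)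

theorem Forall₂.insertionSort_ge {l m : List α} (h : Forall₂ (· ≤ ·) l m) :
    Forall₂ (· ≤ ·) (l.insertionSort (· ≥ ·)) (m.insertionSort (· ≥ ·)) := by
  induction h with
  | nil => exact .nil
  | cons hab _ ih =>
    exact ih.orderedInsert_ge hab (pairwise_insertionSort _ _) (pairwise_insertionSort _ _)

theorem Forall₂.lex_append {l m : List α} (h : Forall₂ (· ≤ ·) l m) (hne : l ≠ m)
    (s t : List α) : Lex (· < ·) (l ++ s) (m ++ t) := by
  induction h with
  | nil => exact absurd rfl hne
  | cons hab _ ih =>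
    obtain hab | rfl := hab.lt_or_eq
    · exact .rel hab
    · exact .cons (ih fun h => hne (h ▸ rfl))

theorem insertionSort_ge_map_eq_append {β : Type*} (l : List β) (p : β → Bool) (f : β → α)
    (h : ∀ a ∈ l, ∀ b ∈ l, p a = false → p b = true → f a ≤ f b) :
    (l.map f).insertionSort (· ≥ ·) =
      ((l.filter p).map f).insertionSort (· ≥ ·) ++
        ((l.filter (!p ·)).map f).insertionSort (· ≥ ·) := by
  refine Perm.eq_of_pairwise' (r := (· ≥ ·)) (pairwise_insertionSort _ _) ?_ ?_
  · rw [pairwise_append]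
    refine ⟨pairwise_insertionSort _ _, pairwise_insertionSort _ _, ?_⟩
    simp only [mem_insertionSort, mem_map, mem_filter]
    rintro _ ⟨b, ⟨hb, hpb⟩, rfl⟩ _ ⟨a, ⟨ha, hpa⟩, rfl⟩
    exact h a ha b hb (by simpa using hpa) hpb
  · calc (l.map f).insertionSort (· ≥ ·)
        _ ~ l.map f := perm_insertionSort _ _
        _ ~ (l.filter p ++ l.filter (!p ·)).map f := ((filter_append_perm p l).map f).symm
        _ = (l.filter p).map f ++ (l.filter (!p ·)).map f := map_append
        _ ~ _ := ((perm_insertionSort _ _).append (perm_insertionSort _ _)).symm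

theorem lex_insertionSort_ge_map {M β : Type*} [AddCommMonoid M] [LinearOrder M]
    [IsOrderedCancelAddMonoid M] (l : List β) (p : β → Bool) {f g : β → M}
    (hf : ∀ a ∈ l, ∀ b ∈ l, p a = false → p b = true → f a ≤ f b)
    (hg : ∀ a ∈ l, ∀ b ∈ l, p a = false → p b = true → g a ≤ g b)
    (hle : ∀ a ∈ l, p a = true → g a ≤ f a) (hlt : ∃ a ∈ l, p a = true ∧ g a < f a) :
    Lex (· < ·) ((l.map g).insertionSort (· ≥ ·)) ((l.map f).insertionSort (· ≥ ·)) := by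
  rw [insertionSort_ge_map_eq_append l p f hf, insertionSort_ge_map_eq_append l p g hg]
  refine Forall₂.lex_append (Forall₂.insertionSort_ge ?_) (fun heq => ?_) _ _
  · simpa [forall₂_map_left_iff, forall₂_map_right_iff, forall₂_same] using hle
  · have hsum := congrArg sum heq
    rw [(perm_insertionSort _ _).sum_eq, (perm_insertionSort _ _).sum_eq] at hsum
    refine (sum_lt_sum g f (fun a ha => hle a (mem_filter.1 ha).1 (mem_filter.1 ha).2) ?_).ne hsum
    obtain ⟨a, ha, hpa, hlt⟩ := hlt
    exact ⟨a, mem_filter.2 ⟨ha, hpa⟩, hlt⟩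

end List

theorem eventually_forall_lt_sub_mul {ι : Type*} [Finite ι] (e d : ι → ℝ) :
    ∀ᶠ ε in 𝓝 (0 : ℝ), ∀ i j, e i < e j → e i - ε * d i < e j - ε * d j := by
  refine eventually_all.2 fun i => eventually_all.2 fun j =>
    eventually_imp_distrib_left.2 fun hij => ?_
  exact ContinuousAt.eventually_lt (by fun_prop) (by fun_prop) (by simpa using hij)

theorem excess_add_smul {α : Type*} (v : Finset α → ℝ) (x y : α → ℝ) (ε : ℝ) (S : Finset α) :
    excess v (x + ε • y) S = excess v x S - ε * ∑ k ∈ S, y k := by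
  simp only [excess, Pi.add_apply, Pi.smul_apply, smul_eq_mul, sum_add_distrib, ← mul_sum]
  ring

theorem excess_lt_excess_of_notMem_Dset {α : Type*} [Fintype α] [DecidableEq α]
    {v : Finset α → ℝ} {x : α → ℝ} {ψ : ℝ} {S T : Finset α} (hS : S ∈ univ.powerset.erase ∅)
    (hSD : S ∉ Dset v x ψ) (hTD : T ∈ Dset v x ψ) : excess v x S < excess v x T :=
  (not_le.1 fun h => hSD (mem_filter.2 ⟨hS, h⟩)).trans_le (mem_filter.1 hTD).2

theorem not_lexLe_of_lex {l₁ l₂ : List ℝ} (h : List.Lex (· < ·) l₂ l₁) : ¬ lexLe l₁ l₂ := by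
  rintro (rfl | h')
  · exact _root_.asymm h h
  · exact _root_.asymm h h'

theorem stmt6_general {α : Type*} [Fintype α] [DecidableEq α]
    (v : Finset α → ℝ)
    (x : α → ℝ) (hx : ∑ k, x k = v Finset.univ)
    (hmin : ∀ z : α → ℝ, ∑ k, z k = v Finset.univ → lexLe (theta v x) (theta v z)) :
    ∀ ψ : ℝ, (Dset v x ψ).Nonempty →
      ∀ y : α → ℝ, ∑ k, y k = 0 → (∀ S ∈ Dset v x ψ, 0 ≤ ∑ k ∈ S, y k) →
        ∀ S ∈ Dset v x ψ, ∑ k ∈ S, y k = 0 := by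
  intro ψ _ y hy hyD S hS
  by_contra hSy
  obtain ⟨ε, hε, hεpos⟩ := (((eventually_forall_lt_sub_mul (excess v x)
    fun T => ∑ k ∈ T, y k).filter_mono nhdsWithin_le_nhds).and
      (self_mem_nhdsWithin : Set.Ioi (0 : ℝ) ∈ 𝓝[>] 0)).exists
  have hz : ∑ k, (x + ε • y) k = v univ := by
    simp [sum_add_distrib, ← mul_sum, hy, hx]
  refine not_lexLe_of_lex ?_ (hmin _ hz)
  refine List.lex_insertionSort_ge_map _ (fun T => decide (T ∈ Dset v x ψ)) ?_ ?_ ?_ ?_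
    <;> simp only [mem_toList, decide_eq_true_eq, decide_eq_false_iff_not, excess_add_smul]
  · exact fun T hT T' _ hTD hT'D => (excess_lt_excess_of_notMem_Dset hT hTD hT'D).le
  · exact fun T hT T' _ hTD hT'D => (hε T T' (excess_lt_excess_of_notMem_Dset hT hTD hT'D)).le
  · exact fun T _ hTD => sub_le_self _ (mul_nonneg hεpos.le (hyD T hTD))
  · exact ⟨S, (mem_filter.1 hS).1, hS,
      sub_lt_self _ (mul_pos hεpos ((hyD S hS).lt_of_ne' hSy))⟩

/-- if `x` is the (unique) pre-nucleolus then `x` has Property I. -/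
theorem stmt6 {α : Type*} [Fintype α] [DecidableEq α] [Nonempty α]
    (v : Finset α → ℝ) (hv : v ∅ = 0)
    (x : α → ℝ) (hx : ∑ k, x k = v Finset.univ)
    (hmin : ∀ z : α → ℝ, ∑ k, z k = v Finset.univ → lexLe (theta v x) (theta v z))
    (huniq : ∀ z : α → ℝ, ∑ k, z k = v Finset.univ →
      (∀ w : α → ℝ, ∑ k, w k = v Finset.univ → lexLe (theta v z) (theta v w)) → z = x) :
    ∀ ψ : ℝ, (Dset v x ψ).Nonempty →
      ∀ y : α → ℝ, ∑ k, y k = 0 → (∀ S ∈ Dset v x ψ, 0 ≤ ∑ k ∈ S, y k) →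
        ∀ S ∈ Dset v x ψ, ∑ k ∈ S, y k = 0 :=
  stmt6_general v x hx hmin
end

section
/- There exist a finite set N, ψ' < ψ, and collections such that D(ψ,x) and D(ψ',x) are both balanced over N, but a sub-collection D̂ with D(ψ,x) ⊆ D̂ ⊆ D(ψ',x) obtained by removing from D(ψ',x) coalitions whose indicator vectors lie in the span of D(ψ,x) need not be balanced. Equivalently (abstract version): there exist balanced collections B ⊆ B' of nonempty subsets of a finite set N and a set B̂ with B ⊆ B̂ ⊆ B' and span{1_S : S ∈ B̂} = span{1_S : S ∈ B'}, such that B̂ is not balanced. -/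
open Finset

/-- abstract version: there exist balanced collections `B ⊆ B'` of nonempty
subsets of a finite set and `B̂` with `B ⊆ B̂ ⊆ B'` whose indicator vectors have the same span
as those of `B'`, yet `B̂` is not balanced. -/
theorem stmt16 :
    ∃ (m : ℕ) (B B' Bhat : Finset (Finset (Fin m))),
      (∀ S ∈ B', S ≠ ∅) ∧ B ⊆ Bhat ∧ Bhat ⊆ B' ∧
      IsBalanced B ∧ IsBalanced B' ∧
      Submodule.span ℝ {f : Fin m → ℝ | ∃ S ∈ Bhat, f = indVec S} =
        Submodule.span ℝ {f : Fin m → ℝ | ∃ S ∈ B', f = indVec S} ∧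
      ¬ IsBalanced Bhat := by
  refine ⟨2, {({0,1} : Finset (Fin 2))}, {{0},{1},{0,1}}, {{0},{0,1}}, ?_, ?_, ?_, ?_, ?_, ?_, ?_⟩
  · decide
  · decide
  · decide
  · exact ⟨fun _ => 1, fun S hS => one_pos, by
      funext k; fin_cases k <;> simp [indVec] <;> decide⟩
  · refine ⟨fun _ => 1/2, fun S hS => by norm_num, ?_⟩
    funext k
    fin_cases k <;>
      (rw [Finset.sum_apply]; rw [Finset.sum_insert (by decide), Finset.sum_insert (by decide), Finset.sum_singleton]; simp [indVec]; norm_num)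
  · apply le_antisymm
    · apply Submodule.span_mono
      rintro f ⟨S, hS, rfl⟩
      exact ⟨S, by fin_cases hS <;> decide, rfl⟩
    · rw [Submodule.span_le]
      rintro f ⟨S, hS, rfl⟩
      fin_cases hS
      · exact Submodule.subset_span ⟨{0}, by decide, rfl⟩
      · have : indVec ({1} : Finset (Fin 2)) = indVec ({0,1} : Finset (Fin 2)) - indVec {0} := by
          funext k; fin_cases k <;> simp [indVec]
        rw [this]
        exact sub_mem (Submodule.subset_span ⟨{0,1}, by decide, rfl⟩)
          (Submodule.subset_span ⟨{0}, by decide, rfl⟩)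
      · exact Submodule.subset_span ⟨{0,1}, by decide, rfl⟩
  · rintro ⟨w, hpos, hsum⟩
    have h0 := congrFun hsum 0
    have h1 := congrFun hsum 1
    rw [Finset.sum_apply, Finset.sum_insert (by decide), Finset.sum_singleton] at h0 h1
    simp [indVec] at h0 h1
    have hw0 : w {0} = 0 := by linarith
    exact absurd hw0 (ne_of_gt (hpos {0} (by decide)))
end
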